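/- arXiv:2209.10363 — 5 statements merged into one kernel-verified Lean document; each statement's English description precedes it below -/
import Mathlib

section
/- Fix a capacity r ≥ 0 and suppose the premium fees π = (π_k^t) satisfy the IC condition. Then for every user i (with demands D_i^t > 0 and any values of lost load V_i^t) and every pair of types k, m ∈ K, the costs of choosing the two contract items are equal: CU_i(k) = CU_i(m). In particular the contract is incentive compatible: a user of type k (i.e., with V_i^t = V_k^t for all t) satisfies CU_i(k) ≤ CU_i(m) for all m ∈ K. -/
open MeasureTheory Finset

noncomputable section

variable {Ω : Type*} [MeasurableSpace Ω] {T : Type*} [Fintype T] {n : ℕ}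

/-- Supply at time `t` under capacity `r`: `s^t(r,Θ^t) = min(D_a^t, r·Θ^t)`. -/
def supplyF (Da : T → ℝ) (Θ : T → Ω → ℝ) (r : ℝ) (t : T) (ω : Ω) : ℝ :=
  min (Da t) (r * Θ t ω)

/-- Energy allocated to a user with demand profile `Di`:
`d_i^t(r,Θ^t) = (D_i^t/D_a^t)·s^t(r,Θ^t)`. -/
def allocF (Da : T → ℝ) (Θ : T → Ω → ℝ) (Di : T → ℝ) (r : ℝ) (t : T) (ω : Ω) : ℝ :=
  Di t / Da t * supplyF Da Θ r t ω

/-- Expected lost fraction `E[1 - s^t(r,Θ^t)/D_a^t]`. -/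
def lostFrac (μ : Measure Ω) (Da : T → ℝ) (Θ : T → Ω → ℝ) (r : ℝ) (t : T) : ℝ :=
  ∫ ω, (1 - supplyF Da Θ r t ω / Da t) ∂μ

/-- Cost `CU_i(m)` of a user with demand `Di` and values of lost load `Vi`
who chooses contract item `m`. -/
def CUins (μ : Measure Ω) (Da : T → ℝ) (Θ : T → Ω → ℝ) (p r : ℝ)
    (π V : Fin (n + 1) → T → ℝ) (Di Vi : T → ℝ) (m : Fin (n + 1)) : ℝ :=
  (∑ t, π m t * Di t) + (∑ t, p * ∫ ω, allocF Da Θ Di r t ω ∂μ)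
    + (∑ t, ∫ ω, Vi t * (Di t - allocF Da Θ Di r t ω) ∂μ)
    - ∑ t, ∫ ω, (V m t - p) * (Di t - allocF Da Θ Di r t ω) ∂μ

/-- Cost `CU_i(0)` of a user with demand `Di` and values of lost load `Vi`
who buys no insurance. -/
def CUnoins (μ : Measure Ω) (Da : T → ℝ) (Θ : T → Ω → ℝ) (p r : ℝ)
    (Di Vi : T → ℝ) : ℝ :=
  (∑ t, p * ∫ ω, allocF Da Θ Di r t ω ∂μ)
    + ∑ t, ∫ ω, Vi t * (Di t - allocF Da Θ Di r t ω) ∂μ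

/-- IC condition: `π_k^t − π_m^t = (V_k^t − V_m^t)·E[1 − s^t/D_a^t]` for all `t, k, m`. -/
def ICcond (μ : Measure Ω) (Da : T → ℝ) (Θ : T → Ω → ℝ) (r : ℝ)
    (π V : Fin (n + 1) → T → ℝ) : Prop :=
  ∀ t k m, π k t - π m t = (V k t - V m t) * lostFrac μ Da Θ r t

/-- IR condition: `0 ≤ π_k^t ≤ (V_k^t − p)·E[1 − s^t/D_a^t]` for all `t, k`. -/
def IRcond (μ : Measure Ω) (Da : T → ℝ) (Θ : T → Ω → ℝ) (p r : ℝ)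
    (π V : Fin (n + 1) → T → ℝ) : Prop :=
  ∀ t k, 0 ≤ π k t ∧ π k t ≤ (V k t - p) * lostFrac μ Da Θ r t

/-- Total reimbursement `C_s^t(r,Θ^t) = Σ_k (V_k^t − p)(D_k^t − d_k^t)`. -/
def CsF (Da : T → ℝ) (Θ : T → Ω → ℝ) (D V : Fin (n + 1) → T → ℝ) (p r : ℝ)
    (t : T) (ω : Ω) : ℝ :=
  ∑ k, (V k t - p) * (D k t - allocF Da Θ (D k) r t ω)

/-- The utility's profit `f^Ins(r,π)` under the insurance contract. -/
def fIns (μ : Measure Ω) (Da : T → ℝ) (Θ : T → Ω → ℝ) (D V : Fin (n + 1) → T → ℝ)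
    (p c : ℝ) (r : ℝ) (π : Fin (n + 1) → T → ℝ) : ℝ :=
  (∑ k, ∑ t, π k t * D k t) + (∑ t, p * ∫ ω, supplyF Da Θ r t ω ∂μ) - c * r
    - ∑ t, ∫ ω, CsF Da Θ D V p r t ω ∂μ

/-- The utility's profit `f^No(r)` without insurance. -/
def fNo (μ : Measure Ω) (Da : T → ℝ) (Θ : T → Ω → ℝ) (p c : ℝ) (r : ℝ) : ℝ :=
  (∑ t, p * ∫ ω, supplyF Da Θ r t ω ∂μ) - c * r

/-- The social cost `C^SO(r) = c_r·r + Σ_t E[C_s^t(r,Θ^t)]`. -/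
def CSO (μ : Measure Ω) (Da : T → ℝ) (Θ : T → Ω → ℝ) (D V : Fin (n + 1) → T → ℝ)
    (p c : ℝ) (r : ℝ) : ℝ :=
  c * r + ∑ t, ∫ ω, CsF Da Θ D V p r t ω ∂μ

/-- `g(r) := −Σ_t p·E[s^t] + c_r·r + Σ_t E[C_s^t] + ξ`. -/
def gReg (μ : Measure Ω) (Da : T → ℝ) (Θ : T → Ω → ℝ) (D V : Fin (n + 1) → T → ℝ)
    (p c ξ : ℝ) (r : ℝ) : ℝ :=
  -(∑ t, p * ∫ ω, supplyF Da Θ r t ω ∂μ) + c * r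
    + (∑ t, ∫ ω, CsF Da Θ D V p r t ω ∂μ) + ξ

/-- `f^l(r) = Σ_t Σ_k D_k^t·(V_k^t − V_1^t)·E[1 − s^t/D_a^t]`. -/
def fL (μ : Measure Ω) (Da : T → ℝ) (Θ : T → Ω → ℝ) (D V : Fin (n + 1) → T → ℝ)
    (r : ℝ) : ℝ :=
  ∑ t, ∑ k, D k t * (V k t - V 0 t) * lostFrac μ Da Θ r t

/-- `f^u(r) = Σ_t Σ_k D_k^t·(V_k^t − p)·E[1 − s^t/D_a^t]`. -/
def fU (μ : Measure Ω) (Da : T → ℝ) (Θ : T → Ω → ℝ) (D V : Fin (n + 1) → T → ℝ)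
    (p : ℝ) (r : ℝ) : ℝ :=
  ∑ t, ∑ k, D k t * (V k t - p) * lostFrac μ Da Θ r t

/-- Feasibility for Problem-Ins: `r ≥ 0`, regulated profit `f^Ins(r,π) ≥ ξ`, IC and IR. -/
def InsFeasible (μ : Measure Ω) (Da : T → ℝ) (Θ : T → Ω → ℝ)
    (D V : Fin (n + 1) → T → ℝ) (p c ξ : ℝ) (r : ℝ) (π : Fin (n + 1) → T → ℝ) : Prop :=
  0 ≤ r ∧ ξ ≤ fIns μ Da Θ D V p c r π ∧ ICcond μ Da Θ r π V ∧ IRcond μ Da Θ p r π V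

/-- Optimality for Problem-Ins: feasible and minimizing the total premium
`Σ_k Σ_t π_k^t D_k^t` among all feasible points. -/
def InsOptimal (μ : Measure Ω) (Da : T → ℝ) (Θ : T → Ω → ℝ)
    (D V : Fin (n + 1) → T → ℝ) (p c ξ : ℝ) (r : ℝ) (π : Fin (n + 1) → T → ℝ) : Prop :=
  InsFeasible μ Da Θ D V p c ξ r π ∧
    ∀ r' π', InsFeasible μ Da Θ D V p c ξ r' π' →
      (∑ k, ∑ t, π k t * D k t) ≤ ∑ k, ∑ t, π' k t * D k t


/-- under the IC condition, every user's costs of choosing any two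
contract items are equal; in particular the contract is incentive compatible. -/
theorem stmt0
    (μ : Measure Ω) [IsProbabilityMeasure μ] [Nonempty T]
    (Θ : T → Ω → ℝ) (hΘmeas : ∀ t, Measurable (Θ t))
    (hΘ01 : ∀ t ω, 0 ≤ Θ t ω ∧ Θ t ω ≤ 1)
    (D V : Fin (n + 1) → T → ℝ) (hD : ∀ k t, 0 < D k t)
    (hVmono : ∀ t, Monotone fun k => V k t)
    (Da : T → ℝ) (hDa : ∀ t, Da t = ∑ k, D k t)
    (p : ℝ) (hp0 : 0 ≤ p) (hpV : ∀ t, p ≤ V 0 t)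
    (r : ℝ) (hr : 0 ≤ r) (π : Fin (n + 1) → T → ℝ)
    (hIC : ICcond μ Da Θ r π V)
    (Di Vi : T → ℝ) (hDi : ∀ t, 0 < Di t) :
    (∀ k m : Fin (n + 1),
        CUins μ Da Θ p r π V Di Vi k = CUins μ Da Θ p r π V Di Vi m) ∧
      ∀ k : Fin (n + 1), (∀ t, Vi t = V k t) →
        ∀ m : Fin (n + 1),
          CUins μ Da Θ p r π V Di Vi k ≤ CUins μ Da Θ p r π V Di Vi m := by
  have hDa0 : ∀ t, Da t ≠ 0 := by
    intro t
    rw [hDa]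
    exact ne_of_gt (Finset.sum_pos (fun k _ => hD k t) Finset.univ_nonempty)
  have key : ∀ (t : T) (c : ℝ), (∫ ω, c * (Di t - allocF Da Θ Di r t ω) ∂μ)
      = c * (Di t * lostFrac μ Da Θ r t) := by
    intro t c
    rw [integral_const_mul]
    congr 1
    rw [lostFrac, ← integral_const_mul]
    congr 1
    funext ω
    rw [allocF]
    field_simp
  have main : ∀ k m : Fin (n + 1),
      CUins μ Da Θ p r π V Di Vi k = CUins μ Da Θ p r π V Di Vi m := by
    intro k m
    unfold CUins
    have h1 : ∀ j : Fin (n + 1),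
        (∑ t, ∫ ω, (V j t - p) * (Di t - allocF Da Θ Di r t ω) ∂μ)
          = ∑ t, (V j t - p) * (Di t * lostFrac μ Da Θ r t) := by
      intro j; exact Finset.sum_congr rfl fun t _ => key t _
    rw [h1 k, h1 m]
    have h2 : (∑ t, π k t * Di t) - ∑ t, (V k t - p) * (Di t * lostFrac μ Da Θ r t)
        = (∑ t, π m t * Di t) - ∑ t, (V m t - p) * (Di t * lostFrac μ Da Θ r t) := by
      rw [← Finset.sum_sub_distrib, ← Finset.sum_sub_distrib]
      refine Finset.sum_congr rfl fun t _ => ?_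
      have h := hIC t k m
      have hk : π k t = π m t + (V k t - V m t) * lostFrac μ Da Θ r t := by linarith
      rw [hk]; ring
    linarith [h2]
  exact ⟨main, fun k _ m => le_of_eq (main k m)⟩

end
end

section
/- Fix a capacity r ≥ 0 and suppose the premium fees π = (π_k^t) satisfy the IR condition. Then for every user i of type k (i.e., with V_i^t = V_k^t for all t) and demands D_i^t > 0, the contract is individually rational: CU_i(k) ≤ CU_i(0). Moreover CU_i(k) = Σ_t (π_k^t + p)·D_i^t, i.e., when a user chooses his own type of contract his cost consists only of the premium fee and the electricity bill under his original demand. -/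
open MeasureTheory Finset

noncomputable section

variable {Ω : Type*} [MeasurableSpace Ω] {T : Type*} [Fintype T] {n : ℕ}

/-! The expected-cost terms of a user are linear in the expected lost fraction: for fixed `t`,
`d_i^t = D_i^t · (s^t / D_a^t)` pointwise, so every expectation reduces to `E[s^t / D_a^t]`. Under
the own-type contract the reimbursement cancels the lost-load cost up to `p·D_i^t·E[1 − s^t/D_a^t]`,
which together with the expected bill `p·E[d_i^t]` is exactly the bill `p·D_i^t`; the IR bound
says the premium is at most the expected reimbursement. -/

omit [Fintype T] in
lemma integrable_supplyF {μ : Measure Ω} [IsFiniteMeasure μ] {Θ : T → Ω → ℝ} {t : T}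
    (hΘ : Integrable (Θ t) μ) (Da : T → ℝ) (r : ℝ) : Integrable (supplyF Da Θ r t) μ :=
  (integrable_const (Da t)).inf (hΘ.const_mul r)

omit [Fintype T] in
lemma integral_mul_sub_allocF (μ : Measure Ω) (Da : T → ℝ) (Θ : T → Ω → ℝ) (Di : T → ℝ)
    (r c : ℝ) (t : T) :
    ∫ ω, c * (Di t - allocF Da Θ Di r t ω) ∂μ = c * Di t * lostFrac μ Da Θ r t := by
  have hpt : ∀ ω, c * (Di t - allocF Da Θ Di r t ω) = c * Di t * (1 - supplyF Da Θ r t ω / Da t) :=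
    fun ω => by simp only [allocF]; ring
  simp only [hpt, integral_const_mul, lostFrac]

omit [Fintype T] in
lemma integral_allocF {μ : Measure Ω} [IsProbabilityMeasure μ] {Da : T → ℝ} {Θ : T → Ω → ℝ}
    {r : ℝ} {t : T} (hs : Integrable (supplyF Da Θ r t) μ) (Di : T → ℝ) :
    ∫ ω, allocF Da Θ Di r t ω ∂μ = Di t * (1 - lostFrac μ Da Θ r t) := by
  have hpt : ∀ ω, allocF Da Θ Di r t ω = Di t * (supplyF Da Θ r t ω / Da t) :=
    fun ω => by simp only [allocF]; ring
  simp only [hpt, integral_const_mul, lostFrac,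
    integral_sub (integrable_const 1) (hs.div_const (Da t)), integral_const, probReal_univ,
    one_smul, sub_sub_cancel]

lemma CUins_le_CUnoins {μ : Measure Ω} {Da : T → ℝ} {Θ : T → Ω → ℝ} {p r : ℝ}
    {π V : Fin (n + 1) → T → ℝ} {m : Fin (n + 1)}
    (hπ : ∀ t, π m t ≤ (V m t - p) * lostFrac μ Da Θ r t) {Di : T → ℝ} (hDi : ∀ t, 0 ≤ Di t)
    (Vi : T → ℝ) :
    CUins μ Da Θ p r π V Di Vi m ≤ CUnoins μ Da Θ p r Di Vi := by
  have hpremium : ∑ t, π m t * Di t ≤ ∑ t, ∫ ω, (V m t - p) * (Di t - allocF Da Θ Di r t ω) ∂μ :=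
    sum_le_sum fun t _ => by
      rw [integral_mul_sub_allocF, mul_right_comm]
      exact mul_le_mul_of_nonneg_right (hπ t) (hDi t)
  unfold CUins CUnoins
  linarith

lemma CUins_self_eq {μ : Measure Ω} [IsProbabilityMeasure μ] {Da : T → ℝ} {Θ : T → Ω → ℝ}
    {r : ℝ} (hs : ∀ t, Integrable (supplyF Da Θ r t) μ) (p : ℝ) (π V : Fin (n + 1) → T → ℝ)
    (Di : T → ℝ) (m : Fin (n + 1)) :
    CUins μ Da Θ p r π V Di (V m) m = ∑ t, (π m t + p) * Di t := by
  simp only [CUins, integral_mul_sub_allocF, integral_allocF (hs _), ← sum_add_distrib,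
    ← sum_sub_distrib]
  exact sum_congr rfl fun t _ => by ring

theorem stmt1_general
    (μ : Measure Ω) [IsProbabilityMeasure μ]
    (Θ : T → Ω → ℝ) (hΘmeas : ∀ t, Measurable (Θ t))
    (hΘ01 : ∀ t ω, 0 ≤ Θ t ω ∧ Θ t ω ≤ 1)
    (V : Fin (n + 1) → T → ℝ)
    (Da : T → ℝ)
    (p : ℝ)
    (r : ℝ) (π : Fin (n + 1) → T → ℝ)
    (hIR : IRcond μ Da Θ p r π V)
    (k : Fin (n + 1)) (Di Vi : T → ℝ) (hDi : ∀ t, 0 < Di t)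
    (hVi : ∀ t, Vi t = V k t) :
    CUins μ Da Θ p r π V Di Vi k ≤ CUnoins μ Da Θ p r Di Vi ∧
      CUins μ Da Θ p r π V Di Vi k = ∑ t, (π k t + p) * Di t := by
  have hΘ : ∀ t, Integrable (Θ t) μ := fun t =>
    Integrable.of_bound (hΘmeas t).aestronglyMeasurable 1 <| .of_forall fun ω => by
      rw [Real.norm_eq_abs, abs_le]
      constructor <;> linarith [hΘ01 t ω]
  obtain rfl : Vi = V k := funext hVi
  exact ⟨CUins_le_CUnoins (fun t => (hIR t k).2) (fun t => (hDi t).le) _,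
    CUins_self_eq (fun t => integrable_supplyF (hΘ t) Da r) p π V Di k⟩

/-- under the IR condition, a user of type `k` prefers the type-`k`
contract item over no insurance, and his cost is just premium plus electricity bill. -/
theorem stmt1
    (μ : Measure Ω) [IsProbabilityMeasure μ] [Nonempty T]
    (Θ : T → Ω → ℝ) (hΘmeas : ∀ t, Measurable (Θ t))
    (hΘ01 : ∀ t ω, 0 ≤ Θ t ω ∧ Θ t ω ≤ 1)
    (D V : Fin (n + 1) → T → ℝ) (hD : ∀ k t, 0 < D k t)
    (hVmono : ∀ t, Monotone fun k => V k t)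
    (Da : T → ℝ) (hDa : ∀ t, Da t = ∑ k, D k t)
    (p : ℝ) (hp0 : 0 ≤ p) (hpV : ∀ t, p ≤ V 0 t)
    (r : ℝ) (hr : 0 ≤ r) (π : Fin (n + 1) → T → ℝ)
    (hIR : IRcond μ Da Θ p r π V)
    (k : Fin (n + 1)) (Di Vi : T → ℝ) (hDi : ∀ t, 0 < Di t)
    (hVi : ∀ t, Vi t = V k t) :
    CUins μ Da Θ p r π V Di Vi k ≤ CUnoins μ Da Θ p r Di Vi ∧
      CUins μ Da Θ p r π V Di Vi k = ∑ t, (π k t + p) * Di t :=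
  stmt1_general μ Θ hΘmeas hΘ01 V Da p r π hIR k Di Vi hDi hVi

end
end

section
/- Let ξ ≥ 0 and assume some r' ≥ 0 satisfies f^No(r') ≥ ξ. Then the feasible set {r ≥ 0 : f^No(r) ≥ ξ} of Problem-NoIns is nonempty and compact, its maximum r‡ exists, and the constraint binds at this maximum: f^No(r‡) = ξ. -/
open MeasureTheory Finset

noncomputable section

variable {Ω : Type*} [MeasurableSpace Ω] {T : Type*} [Fintype T] {n : ℕ}

lemma abs_min_sub_min_aux (a b c : ℝ) : |min a b - min a c| ≤ |b - c| := by
  have key : ∀ x y : ℝ, min a x - min a y ≤ |x - y| := by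
    intro x y
    have h1 : x ≤ y + |x - y| := by cases abs_cases (x - y) <;> linarith
    have h2 : min a x ≤ min (a + |x - y|) (y + |x - y|) :=
      min_le_min (by linarith [abs_nonneg (x - y)]) h1
    rw [min_add_add_right] at h2
    linarith
  rw [abs_sub_le_iff]
  refine ⟨key b c, ?_⟩
  have := key c b
  rwa [abs_sub_comm] at this

lemma supply_meas (Da : T → ℝ) (Θ : T → Ω → ℝ) (hΘmeas : ∀ t, Measurable (Θ t))
    (r : ℝ) (t : T) : Measurable (supplyF Da Θ r t) :=
  measurable_const.min ((hΘmeas t).const_mul r)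

lemma supply_int (μ : Measure Ω) [IsProbabilityMeasure μ]
    (Θ : T → Ω → ℝ) (hΘmeas : ∀ t, Measurable (Θ t))
    (hΘ01 : ∀ t ω, 0 ≤ Θ t ω ∧ Θ t ω ≤ 1) (Da : T → ℝ) (r : ℝ) (t : T) :
    Integrable (supplyF Da Θ r t) μ := by
  refine (integrable_const (max |Da t| |r|)).mono'
    (supply_meas Da Θ hΘmeas r t).aestronglyMeasurable (ae_of_all _ fun ω => ?_)
  have h1 := (hΘ01 t ω).1
  have h2 := (hΘ01 t ω).2
  have habs : |r * Θ t ω| ≤ |r| := by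
    rw [abs_mul]
    calc |r| * |Θ t ω| ≤ |r| * 1 := by
          refine mul_le_mul_of_nonneg_left ?_ (abs_nonneg r)
          rw [abs_le]; exact ⟨by linarith, h2⟩
      _ = |r| := mul_one _
  rw [Real.norm_eq_abs, abs_le]
  constructor
  · refine le_min ?_ ?_
    · have := neg_abs_le (Da t); have := le_max_left |Da t| |r|; linarith
    · have := (abs_le.1 habs).1; have := le_max_right |Da t| |r|; linarith
  · calc supplyF Da Θ r t ω ≤ Da t := min_le_left _ _
      _ ≤ |Da t| := le_abs_self _
      _ ≤ _ := le_max_left _ _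

lemma fNo_cont (μ : Measure Ω) [IsProbabilityMeasure μ]
    (Θ : T → Ω → ℝ) (hΘmeas : ∀ t, Measurable (Θ t))
    (hΘ01 : ∀ t ω, 0 ≤ Θ t ω ∧ Θ t ω ≤ 1) (Da : T → ℝ) (p c : ℝ) :
    Continuous (fNo μ Da Θ p c) := by
  have hF : ∀ t : T, Continuous (fun r => ∫ ω, supplyF Da Θ r t ω ∂μ) := by
    intro t
    refine (LipschitzWith.of_dist_le_mul (K := 1) fun r r' => ?_).continuous
    rw [dist_eq_norm, NNReal.coe_one, one_mul]
    have hint : Integrable (fun ω => supplyF Da Θ r t ω - supplyF Da Θ r' t ω) μ :=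
      (supply_int μ Θ hΘmeas hΘ01 Da r t).sub (supply_int μ Θ hΘmeas hΘ01 Da r' t)
    rw [← integral_sub (supply_int μ Θ hΘmeas hΘ01 Da r t)
      (supply_int μ Θ hΘmeas hΘ01 Da r' t)]
    calc ‖∫ ω, (supplyF Da Θ r t ω - supplyF Da Θ r' t ω) ∂μ‖
        ≤ ∫ ω, ‖supplyF Da Θ r t ω - supplyF Da Θ r' t ω‖ ∂μ :=
          norm_integral_le_integral_norm _
      _ ≤ ∫ _ω, dist r r' ∂μ := by
          refine integral_mono hint.norm (integrable_const _) fun ω => ?_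
          have h2 := (hΘ01 t ω).2
          have h1 := (hΘ01 t ω).1
          calc ‖supplyF Da Θ r t ω - supplyF Da Θ r' t ω‖
              ≤ |r * Θ t ω - r' * Θ t ω| := abs_min_sub_min_aux _ _ _
            _ = |r - r'| * |Θ t ω| := by rw [← sub_mul, abs_mul]
            _ ≤ |r - r'| * 1 := by
                refine mul_le_mul_of_nonneg_left ?_ (abs_nonneg _)
                rw [abs_le]; exact ⟨by linarith, h2⟩
            _ = dist r r' := by rw [mul_one, Real.dist_eq]
      _ = dist r r' := by simp
  unfold fNo
  exact (continuous_finset_sum _ fun t _ => continuous_const.mul (hF t)).sub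
    (continuous_const.mul continuous_id)

lemma fNo_bound (μ : Measure Ω) [IsProbabilityMeasure μ]
    (Θ : T → Ω → ℝ) (hΘmeas : ∀ t, Measurable (Θ t))
    (hΘ01 : ∀ t ω, 0 ≤ Θ t ω ∧ Θ t ω ≤ 1) (Da : T → ℝ)
    (p c : ℝ) (hp : 0 ≤ p) (r : ℝ) :
    fNo μ Da Θ p c r ≤ (∑ t, p * Da t) - c * r := by
  unfold fNo
  have : ∀ t : T, p * ∫ ω, supplyF Da Θ r t ω ∂μ ≤ p * Da t := by
    intro t
    refine mul_le_mul_of_nonneg_left ?_ hp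
    calc ∫ ω, supplyF Da Θ r t ω ∂μ ≤ ∫ _ω, Da t ∂μ :=
          integral_mono (supply_int μ Θ hΘmeas hΘ01 Da r t) (integrable_const _)
            fun ω => min_le_left _ _
      _ = Da t := by simp
  have hsum : ∑ t : T, p * ∫ ω, supplyF Da Θ r t ω ∂μ ≤ ∑ t : T, p * Da t :=
    Finset.sum_le_sum fun t _ => this t
  linarith

/-- if Problem-NoIns is feasible, its feasible set is nonempty and
compact, its maximum `r‡` exists, and the constraint binds there: `f^No(r‡) = ξ`. -/
theorem stmt6
    (μ : Measure Ω) [IsProbabilityMeasure μ] [Nonempty T]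
    (Θ : T → Ω → ℝ) (hΘmeas : ∀ t, Measurable (Θ t))
    (hΘ01 : ∀ t ω, 0 ≤ Θ t ω ∧ Θ t ω ≤ 1)
    (Da : T → ℝ) (hDa : ∀ t, 0 < Da t)
    (p : ℝ) (hp : 0 < p) (c : ℝ) (hc : 0 < c)
    (ξ : ℝ) (hξ : 0 ≤ ξ)
    (hfeas : ∃ r' : ℝ, 0 ≤ r' ∧ ξ ≤ fNo μ Da Θ p c r') :
    ({r : ℝ | 0 ≤ r ∧ ξ ≤ fNo μ Da Θ p c r}).Nonempty ∧
      IsCompact {r : ℝ | 0 ≤ r ∧ ξ ≤ fNo μ Da Θ p c r} ∧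
      ∃ rdd : ℝ, IsGreatest {r : ℝ | 0 ≤ r ∧ ξ ≤ fNo μ Da Θ p c r} rdd ∧
        fNo μ Da Θ p c rdd = ξ := by
  set S := {r : ℝ | 0 ≤ r ∧ ξ ≤ fNo μ Da Θ p c r} with hS
  have hcont := fNo_cont μ Θ hΘmeas hΘ01 Da p c
  obtain ⟨r', hr'0, hr'⟩ := hfeas
  have hne : S.Nonempty := ⟨r', hr'0, hr'⟩
  have hclosed : IsClosed S := by
    rw [hS, Set.setOf_and]
    exact (isClosed_le continuous_const continuous_id).inter
      (isClosed_le continuous_const hcont)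
  set B := (∑ t, p * Da t) / c with hB
  have hsub : S ⊆ Set.Icc 0 B := by
    rintro r ⟨hr0, hrξ⟩
    refine ⟨hr0, ?_⟩
    have hb := fNo_bound μ Θ hΘmeas hΘ01 Da p c hp.le r
    rw [hB, le_div_iff₀ hc]
    have : c * r ≤ ∑ t, p * Da t - ξ := by linarith
    linarith [mul_comm c r ▸ this]
  have hcomp : IsCompact S := isCompact_Icc.of_isClosed_subset hclosed hsub
  refine ⟨hne, hcomp, ?_⟩
  obtain ⟨rdd, hG⟩ := hcomp.exists_isGreatest hne
  refine ⟨rdd, hG, ?_⟩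
  by_contra hne'
  have hlt : ξ < fNo μ Da Θ p c rdd := lt_of_le_of_ne hG.1.2 (Ne.symm hne')
  have hopen : IsOpen {r : ℝ | ξ < fNo μ Da Θ p c r} :=
    isOpen_lt continuous_const hcont
  obtain ⟨ε, hε, hball⟩ := Metric.isOpen_iff.1 hopen rdd hlt
  have hmem : rdd + ε / 2 ∈ S := by
    have : rdd + ε / 2 ∈ Metric.ball rdd ε := by
      rw [Metric.mem_ball, Real.dist_eq]
      rw [abs_of_pos (by linarith : (0:ℝ) < rdd + ε / 2 - rdd)]
      linarith
    exact ⟨by linarith [hG.1.1], (hball this).le⟩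
  have := hG.2 hmem
  linarith

end
end

section
/- Suppose Problem-Ins has an optimal solution. Then Problem-Ins has an optimal solution (r,π) at which the regulated-profit constraint binds with equality: f^Ins(r,π) = ξ. -/
open MeasureTheory Finset

noncomputable section

variable {Ω : Type*} [MeasurableSpace Ω] {T : Type*} [Fintype T] {n : ℕ}

/-- if Problem-Ins has an optimal solution, then it has an optimal
solution at which the regulated-profit constraint binds: `f^Ins(r,π) = ξ`. -/
theorem stmt11
    (μ : Measure Ω) [IsProbabilityMeasure μ] [Nonempty T]
    (Θ : T → Ω → ℝ) (hΘmeas : ∀ t, Measurable (Θ t))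
    (hΘ01 : ∀ t ω, 0 ≤ Θ t ω ∧ Θ t ω ≤ 1)
    (D V : Fin (n + 1) → T → ℝ) (hD : ∀ k t, 0 < D k t)
    (hVmono : ∀ t, Monotone fun k => V k t)
    (Da : T → ℝ) (hDa : ∀ t, Da t = ∑ k, D k t)
    (p : ℝ) (hp0 : 0 ≤ p) (hpV : ∀ t, p ≤ V 0 t)
    (c : ℝ) (hc : 0 < c) (ξ : ℝ) (hξ : 0 ≤ ξ)
    (hopt : ∃ r π, InsOptimal μ Da Θ D V p c ξ r π) :
    ∃ r π, InsOptimal μ Da Θ D V p c ξ r π ∧ fIns μ Da Θ D V p c r π = ξ := by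
  classical
  obtain ⟨r₀, π₀, hopt₀⟩ := hopt
  obtain ⟨⟨hr₀, hprofit, hIC, hIR⟩, hmin⟩ := hopt₀
  have hDapos : ∀ t, 0 < Da t := by
    intro t; rw [hDa t]; exact Finset.sum_pos (fun k _ => hD k t) Finset.univ_nonempty
  have hsupmeas : ∀ (r : ℝ) t, Measurable (supplyF Da Θ r t) := fun r t =>
    measurable_const.min ((hΘmeas t).const_mul r)
  have hsup_le : ∀ (r : ℝ) t ω, supplyF Da Θ r t ω ≤ Da t := fun r t ω => min_le_left _ _
  have hsup_nonneg : ∀ (r : ℝ), 0 ≤ r → ∀ t ω, 0 ≤ supplyF Da Θ r t ω := fun r hr t ω =>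
    le_min (hDapos t).le (mul_nonneg hr (hΘ01 t ω).1)
  have habsmin : ∀ a b : ℝ, |min a b| ≤ max |a| |b| := by
    intro a b
    rcases min_cases a b with ⟨h, _⟩ | ⟨h, _⟩ <;> rw [h]
    · exact le_max_left _ _
    · exact le_max_right _ _
  have hint : ∀ (r : ℝ) t, Integrable (supplyF Da Θ r t) μ := by
    intro r t
    refine (integrable_const (max |Da t| |r|)).mono'
      ((hsupmeas r t).aestronglyMeasurable) ?_
    filter_upwards with ω
    rw [Real.norm_eq_abs]
    refine le_trans (habsmin _ _) (max_le_max le_rfl ?_)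
    rw [abs_mul]
    calc |r| * |Θ t ω| ≤ |r| * 1 := by
          refine mul_le_mul_of_nonneg_left ?_ (abs_nonneg _)
          rw [abs_le]; exact ⟨by linarith [(hΘ01 t ω).1], (hΘ01 t ω).2⟩
      _ = |r| := mul_one _
  have hSle : ∀ (r : ℝ) t, (∫ ω, supplyF Da Θ r t ω ∂μ) ≤ Da t := by
    intro r t
    calc (∫ ω, supplyF Da Θ r t ω ∂μ) ≤ ∫ _ω, Da t ∂μ :=
          integral_mono (hint r t) (integrable_const _) (fun ω => hsup_le r t ω)
      _ = Da t := by simp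
  have hSnonneg : ∀ (r : ℝ), 0 ≤ r → ∀ t, 0 ≤ ∫ ω, supplyF Da Θ r t ω ∂μ := by
    intro r hr t
    exact integral_nonneg fun ω => hsup_nonneg r hr t ω
  have hSmono : ∀ t (r1 r2 : ℝ), r1 ≤ r2 →
      (∫ ω, supplyF Da Θ r1 t ω ∂μ) ≤ ∫ ω, supplyF Da Θ r2 t ω ∂μ := by
    intro t r1 r2 h
    refine integral_mono (hint r1 t) (hint r2 t) fun ω => ?_
    exact min_le_min le_rfl (mul_le_mul_of_nonneg_right h (hΘ01 t ω).1)
  have hlost : ∀ (r : ℝ) t, lostFrac μ Da Θ r t = 1 - (∫ ω, supplyF Da Θ r t ω ∂μ) / Da t := by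
    intro r t
    rw [lostFrac, integral_sub (integrable_const 1) ((hint r t).div_const _),
      MeasureTheory.integral_div]
    simp
  have hlf_nonneg : ∀ (r : ℝ) t, 0 ≤ lostFrac μ Da Θ r t := by
    intro r t
    rw [hlost r t]
    have := (div_le_one (hDapos t)).2 (hSle r t)
    linarith
  have hlf_le_one : ∀ (r : ℝ), 0 ≤ r → ∀ t, lostFrac μ Da Θ r t ≤ 1 := by
    intro r hr t
    rw [hlost r t]
    have := div_nonneg (hSnonneg r hr t) (hDapos t).le
    linarith
  have hlf_anti : ∀ t (r1 r2 : ℝ), r1 ≤ r2 →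
      lostFrac μ Da Θ r2 t ≤ lostFrac μ Da Θ r1 t := by
    intro t r1 r2 h
    rw [hlost, hlost]
    have := (div_le_div_iff_of_pos_right (hDapos t)).2 (hSmono t r1 r2 h)
    linarith
  have hintalloc : ∀ (k : Fin (n + 1)) (r : ℝ) t,
      Integrable (fun ω => allocF Da Θ (D k) r t ω) μ := by
    intro k r t
    simp only [allocF]
    exact (hint r t).const_mul _
  have hCs : ∀ (r : ℝ) t, (∫ ω, CsF Da Θ D V p r t ω ∂μ)
      = ∑ k, (V k t - p) * (D k t - D k t / Da t * ∫ ω, supplyF Da Θ r t ω ∂μ) := by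
    intro r t
    simp only [CsF]
    rw [integral_finset_sum]
    swap
    · intro k _
      have h := (((integrable_const (D k t)).sub (hintalloc k r t)).const_mul (V k t - p))
      simpa [Pi.sub_def] using h
    refine Finset.sum_congr rfl fun k _ => ?_
    rw [integral_const_mul, integral_sub (integrable_const _) (hintalloc k r t)]
    simp only [allocF]
    rw [integral_const_mul]
    simp
  have hfIns : ∀ (r : ℝ) (π : Fin (n + 1) → T → ℝ), fIns μ Da Θ D V p c r π =
      (∑ k, ∑ t, π k t * D k t) + (∑ t, p * ∫ ω, supplyF Da Θ r t ω ∂μ) - c * r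
        - ∑ t, ∑ k, (V k t - p) * (D k t - D k t / Da t * ∫ ω, supplyF Da Θ r t ω ∂μ) := by
    intro r π
    simp only [fIns]
    congr 1
    exact Finset.sum_congr rfl fun t _ => hCs r t
  by_cases heq : fIns μ Da Θ D V p c r₀ π₀ = ξ
  · exact ⟨r₀, π₀, ⟨⟨hr₀, hprofit, hIC, hIR⟩, hmin⟩, heq⟩
  have hgt : ξ < fIns μ Da Θ D V p c r₀ π₀ := lt_of_le_of_ne hprofit (Ne.symm heq)
  -- Step 1: the lowest premium is zero at every time.
  have hπ0 : ∀ t, π₀ 0 t = 0 := by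
    intro t₀
    by_contra hne
    have hpos : 0 < π₀ 0 t₀ := lt_of_le_of_ne (hIR t₀ 0).1 (Ne.symm hne)
    have hDtpos : 0 < ∑ k, D k t₀ := Finset.sum_pos (fun k _ => hD k t₀) Finset.univ_nonempty
    set ε : ℝ := min (π₀ 0 t₀) ((fIns μ Da Θ D V p c r₀ π₀ - ξ) / ∑ k, D k t₀) with hε
    have hεpos : 0 < ε := lt_min hpos (div_pos (sub_pos.2 hgt) hDtpos)
    set π' : Fin (n + 1) → T → ℝ := fun k t => π₀ k t - if t = t₀ then ε else 0 with hπ'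
    have hsum : (∑ k, ∑ t, π' k t * D k t)
        = (∑ k, ∑ t, π₀ k t * D k t) - ε * ∑ k, D k t₀ := by
      simp only [hπ', sub_mul, Finset.sum_sub_distrib, ite_mul, zero_mul,
        Finset.sum_ite_eq', Finset.mem_univ, if_true, Finset.mul_sum]
    have hεDt : ε * (∑ k, D k t₀) ≤ fIns μ Da Θ D V p c r₀ π₀ - ξ := by
      have h1 : ε ≤ (fIns μ Da Θ D V p c r₀ π₀ - ξ) / ∑ k, D k t₀ := min_le_right _ _
      exact (le_div_iff₀ hDtpos).1 h1
    have hfdiff : fIns μ Da Θ D V p c r₀ π' = fIns μ Da Θ D V p c r₀ π₀ - ε * ∑ k, D k t₀ := by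
      rw [hfIns r₀ π', hfIns r₀ π₀, hsum]; ring
    have hπ0le : ∀ k, π₀ 0 t₀ ≤ π₀ k t₀ := by
      intro k
      have h1 := hIC t₀ k 0
      have h2 : 0 ≤ (V k t₀ - V 0 t₀) * lostFrac μ Da Θ r₀ t₀ :=
        mul_nonneg (sub_nonneg.2 (hVmono t₀ (Fin.zero_le k))) (hlf_nonneg r₀ t₀)
      linarith
    have hfeas' : InsFeasible μ Da Θ D V p c ξ r₀ π' := by
      refine ⟨hr₀, ?_, ?_, ?_⟩
      · rw [hfdiff]; linarith
      · intro t k m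
        simp only [hπ']
        exact (sub_sub_sub_cancel_right _ _ _).trans (hIC t k m)
      · intro t k
        by_cases ht : t = t₀
        · simp only [hπ', if_pos ht]
          rw [ht]
          have hεle : ε ≤ π₀ 0 t₀ := by rw [hε]; exact min_le_left _ _
          constructor
          · linarith [hπ0le k]
          · linarith [(hIR t₀ k).2, hεpos.le]
        · simp only [hπ', if_neg ht, sub_zero]
          exact hIR t k
    have hcontra := hmin r₀ π' hfeas'
    rw [hsum] at hcontra
    nlinarith [mul_pos hεpos hDtpos]
  have hπform : ∀ k t, π₀ k t = (V k t - V 0 t) * lostFrac μ Da Θ r₀ t := by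
    intro k t
    have h1 := hIC t k 0
    rw [hπ0 t] at h1
    linarith
  -- Step 2: continuity of profit along the canonical premium path.
  set φ : ℝ → ℝ := fun r =>
    fIns μ Da Θ D V p c r (fun k t => (V k t - V 0 t) * lostFrac μ Da Θ r t) with hφ
  have hS_cont : ∀ t, Continuous fun r : ℝ => ∫ ω, supplyF Da Θ r t ω ∂μ := by
    intro t
    have hlip : LipschitzWith 1 fun r : ℝ => ∫ ω, supplyF Da Θ r t ω ∂μ := by
      apply LipschitzWith.of_dist_le_mul
      intro r1 r2
      rw [NNReal.coe_one, one_mul, Real.dist_eq, Real.dist_eq,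
        ← integral_sub (hint r1 t) (hint r2 t)]
      have hb : ∀ ω, ‖supplyF Da Θ r1 t ω - supplyF Da Θ r2 t ω‖ ≤ |r1 - r2| := by
        intro ω
        rw [Real.norm_eq_abs]
        calc |supplyF Da Θ r1 t ω - supplyF Da Θ r2 t ω|
            ≤ max |Da t - Da t| |r1 * Θ t ω - r2 * Θ t ω| := abs_min_sub_min_le_max _ _ _ _
          _ = |r1 - r2| * |Θ t ω| := by
              rw [sub_self, abs_zero, ← sub_mul, abs_mul]
              exact max_eq_right (mul_nonneg (abs_nonneg _) (abs_nonneg _))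
          _ ≤ |r1 - r2| * 1 := by
              refine mul_le_mul_of_nonneg_left ?_ (abs_nonneg _)
              rw [abs_le]; exact ⟨by linarith [(hΘ01 t ω).1], (hΘ01 t ω).2⟩
          _ = |r1 - r2| := mul_one _
      have hnorm := norm_integral_le_of_norm_le_const (μ := μ)
        (f := fun ω => supplyF Da Θ r1 t ω - supplyF Da Θ r2 t ω)
        (C := |r1 - r2|) (Filter.Eventually.of_forall hb)
      rw [Real.norm_eq_abs] at hnorm
      simpa using hnorm
    exact hlip.continuous
  have hcont : Continuous φ := by
    have hφeq : φ = fun r =>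
        (∑ k, ∑ t, (V k t - V 0 t) * (1 - (∫ ω, supplyF Da Θ r t ω ∂μ) / Da t) * D k t)
          + (∑ t, p * ∫ ω, supplyF Da Θ r t ω ∂μ) - c * r
          - ∑ t, ∑ k, (V k t - p) * (D k t - D k t / Da t * ∫ ω, supplyF Da Θ r t ω ∂μ) := by
      funext r
      rw [hφ]
      simp only [hfIns, hlost]
    rw [hφeq]
    refine ((Continuous.add ?_ ?_).sub (continuous_const.mul continuous_id)).sub ?_
    · refine continuous_finset_sum _ fun k _ => continuous_finset_sum _ fun t _ => ?_
      exact (continuous_const.mul (continuous_const.sub ((hS_cont t).div_const _))).mul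
        continuous_const
    · exact continuous_finset_sum _ fun t _ => continuous_const.mul (hS_cont t)
    · refine continuous_finset_sum _ fun t _ => continuous_finset_sum _ fun k _ => ?_
      exact continuous_const.mul (continuous_const.sub (continuous_const.mul (hS_cont t)))
  -- Step 3: φ is small for large r.
  set M : ℝ := (∑ k, ∑ t, (V k t - V 0 t) * D k t) + ∑ t, p * Da t with hM
  have hφle : ∀ r : ℝ, 0 ≤ r → φ r ≤ M - c * r := by
    intro r hr
    simp only [hφ, hfIns]
    have h1 : (∑ k, ∑ t, (V k t - V 0 t) * lostFrac μ Da Θ r t * D k t)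
        ≤ ∑ k, ∑ t, (V k t - V 0 t) * D k t := by
      refine Finset.sum_le_sum fun k _ => Finset.sum_le_sum fun t _ => ?_
      have h0 : 0 ≤ V k t - V 0 t := sub_nonneg.2 (hVmono t (Fin.zero_le k))
      calc (V k t - V 0 t) * lostFrac μ Da Θ r t * D k t
          = (V k t - V 0 t) * D k t * lostFrac μ Da Θ r t := by ring
        _ ≤ (V k t - V 0 t) * D k t * 1 :=
            mul_le_mul_of_nonneg_left (hlf_le_one r hr t) (mul_nonneg h0 (hD k t).le)
        _ = (V k t - V 0 t) * D k t := mul_one _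
    have h2 : (∑ t, p * ∫ ω, supplyF Da Θ r t ω ∂μ) ≤ ∑ t, p * Da t :=
      Finset.sum_le_sum fun t _ => mul_le_mul_of_nonneg_left (hSle r t) hp0
    have h3 : 0 ≤ ∑ t, ∑ k,
        (V k t - p) * (D k t - D k t / Da t * ∫ ω, supplyF Da Θ r t ω ∂μ) := by
      refine Finset.sum_nonneg fun t _ => Finset.sum_nonneg fun k _ => ?_
      refine mul_nonneg (sub_nonneg.2 (le_trans (hpV t) (hVmono t (Fin.zero_le k)))) ?_
      have h4 : D k t / Da t * (∫ ω, supplyF Da Θ r t ω ∂μ) ≤ D k t / Da t * Da t :=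
        mul_le_mul_of_nonneg_left (hSle r t) (div_nonneg (hD k t).le (hDapos t).le)
      rw [div_mul_cancel₀ _ (hDapos t).ne'] at h4
      linarith
    rw [hM]
    linarith
  have hπeq : (fun k t => (V k t - V 0 t) * lostFrac μ Da Θ r₀ t) = π₀ := by
    funext k t; exact (hπform k t).symm
  have hφr₀ : φ r₀ = fIns μ Da Θ D V p c r₀ π₀ := by
    simp only [hφ]
    rw [hπeq]
  set R : ℝ := max r₀ ((M - ξ + 1) / c) with hR
  have hR1 : r₀ ≤ R := le_max_left _ _
  have hR0 : 0 ≤ R := hr₀.trans hR1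
  have hφR : φ R < ξ := by
    have h1 := hφle R hR0
    have h2 : (M - ξ + 1) / c ≤ R := le_max_right _ _
    have h3 : M - ξ + 1 ≤ R * c := (div_le_iff₀ hc).1 h2
    nlinarith
  -- Step 4: intermediate value theorem.
  have hmem : ξ ∈ Set.Icc (φ R) (φ r₀) := ⟨hφR.le, by rw [hφr₀]; exact hgt.le⟩
  obtain ⟨rs, hrs, hφrs⟩ := intermediate_value_Icc' hR1 hcont.continuousOn hmem
  have hrs0 : 0 ≤ rs := hr₀.trans hrs.1
  have hfeq : fIns μ Da Θ D V p c rs (fun k t => (V k t - V 0 t) * lostFrac μ Da Θ rs t) = ξ := by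
    simp only [hφ] at hφrs
    exact hφrs
  have hfeas : InsFeasible μ Da Θ D V p c ξ rs
      (fun k t => (V k t - V 0 t) * lostFrac μ Da Θ rs t) := by
    refine ⟨hrs0, hfeq.ge, ?_, ?_⟩
    · intro t k m; ring
    · intro t k
      constructor
      · exact mul_nonneg (sub_nonneg.2 (hVmono t (Fin.zero_le k))) (hlf_nonneg rs t)
      · exact mul_le_mul_of_nonneg_right (by linarith [hpV t]) (hlf_nonneg rs t)
  refine ⟨rs, fun k t => (V k t - V 0 t) * lostFrac μ Da Θ rs t, ⟨hfeas, ?_⟩, hfeq⟩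
  intro r' π' hfeas'
  have hle : (∑ k, ∑ t, (V k t - V 0 t) * lostFrac μ Da Θ rs t * D k t)
      ≤ ∑ k, ∑ t, π₀ k t * D k t := by
    refine Finset.sum_le_sum fun k _ => Finset.sum_le_sum fun t _ => ?_
    rw [hπform k t]
    have h0 : 0 ≤ V k t - V 0 t := sub_nonneg.2 (hVmono t (Fin.zero_le k))
    have hL := hlf_anti t r₀ rs hrs.1
    calc (V k t - V 0 t) * lostFrac μ Da Θ rs t * D k t
        = (V k t - V 0 t) * D k t * lostFrac μ Da Θ rs t := by ring
      _ ≤ (V k t - V 0 t) * D k t * lostFrac μ Da Θ r₀ t :=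
          mul_le_mul_of_nonneg_left hL (mul_nonneg h0 (hD k t).le)
      _ = (V k t - V 0 t) * lostFrac μ Da Θ r₀ t * D k t := by ring
  exact le_trans hle (hmin r' π' hfeas')

end
end

section
/- (Profit-seeking utility.) For every capacity r ≥ 0 and every premium fees π satisfying the IR condition, f^Ins(r,π) ≤ f^Ins(r,π̄) = f^No(r), where π̄_k^t = (V_k^t − p)·E[1 − s^t(r,Θ^t)/D_a^t] puts every IR constraint at its upper bound (and π̄ also satisfies the IC condition). Consequently, the supremum of f^Ins(r,π) over all r ≥ 0 and all π satisfying the IC and IR conditions equals the supremum of f^No(r) over r ≥ 0: a profit-seeking utility earns the same maximal profit with or without insurance. -/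
open MeasureTheory Finset

noncomputable section

variable {Ω : Type*} [MeasurableSpace Ω] {T : Type*} [Fintype T] {n : ℕ}

/-- profit-seeking utility: for every `r ≥ 0` and every IR-compliant
`π`, `f^Ins(r,π) ≤ f^Ins(r,π̄) = f^No(r)` where `π̄` puts every IR constraint at its
upper bound (and `π̄` satisfies IC); hence the maximal profit with insurance equals
the maximal profit without insurance. -/
theorem stmt18
    (μ : Measure Ω) [IsProbabilityMeasure μ] [Nonempty T]
    (Θ : T → Ω → ℝ) (hΘmeas : ∀ t, Measurable (Θ t))
    (hΘ01 : ∀ t ω, 0 ≤ Θ t ω ∧ Θ t ω ≤ 1)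
    (D V : Fin (n + 1) → T → ℝ) (hD : ∀ k t, 0 < D k t)
    (hVmono : ∀ t, Monotone fun k => V k t)
    (Da : T → ℝ) (hDa : ∀ t, Da t = ∑ k, D k t)
    (p : ℝ) (hp0 : 0 ≤ p) (hpV : ∀ t, p ≤ V 0 t)
    (c : ℝ) (hc : 0 < c) :
    (∀ r : ℝ, 0 ≤ r → ∀ π : Fin (n + 1) → T → ℝ, IRcond μ Da Θ p r π V →
        fIns μ Da Θ D V p c r π ≤
          fIns μ Da Θ D V p c r (fun k t => (V k t - p) * lostFrac μ Da Θ r t)) ∧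
      (∀ r : ℝ, 0 ≤ r →
        fIns μ Da Θ D V p c r (fun k t => (V k t - p) * lostFrac μ Da Θ r t) =
          fNo μ Da Θ p c r) ∧
      (∀ r : ℝ, 0 ≤ r →
        ICcond μ Da Θ r (fun k t => (V k t - p) * lostFrac μ Da Θ r t) V) ∧
      sSup {x : ℝ | ∃ r : ℝ, 0 ≤ r ∧ ∃ π : Fin (n + 1) → T → ℝ,
          ICcond μ Da Θ r π V ∧ IRcond μ Da Θ p r π V ∧
          x = fIns μ Da Θ D V p c r π} =
        sSup {x : ℝ | ∃ r : ℝ, 0 ≤ r ∧ x = fNo μ Da Θ p c r} := by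
  classical
  have hDa0 : ∀ t, 0 < Da t := fun t => by
    rw [hDa t]; exact Finset.sum_pos (fun k _ => hD k t) Finset.univ_nonempty
  have hs0 : ∀ r, 0 ≤ r → ∀ t ω, 0 ≤ supplyF Da Θ r t ω := by
    intro r hr t ω
    exact le_min (hDa0 t).le (mul_nonneg hr (hΘ01 t ω).1)
  have hlf0 : ∀ r t, 0 ≤ lostFrac μ Da Θ r t := by
    intro r t
    refine integral_nonneg fun ω => ?_
    have h1 : supplyF Da Θ r t ω / Da t ≤ 1 := by
      rw [div_le_one (hDa0 t)]; exact min_le_left _ _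
    simp only [Pi.zero_apply]; linarith
  have hVp : ∀ (k : Fin (n + 1)) t, p ≤ V k t := fun k t =>
    (hpV t).trans (hVmono t (Fin.zero_le k))
  have hIntCs : ∀ r t, (∫ ω, CsF Da Θ D V p r t ω ∂μ)
      = ∑ k, (V k t - p) * D k t * lostFrac μ Da Θ r t := by
    intro r t
    have hpt : ∀ ω, CsF Da Θ D V p r t ω
        = (∑ k, (V k t - p) * D k t) * (1 - supplyF Da Θ r t ω / Da t) := by
      intro ω
      unfold CsF allocF
      rw [Finset.sum_mul]
      exact Finset.sum_congr rfl fun k _ => by ring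
    simp_rw [hpt]
    rw [integral_const_mul, lostFrac, Finset.sum_mul]
  have hEq : ∀ r, fIns μ Da Θ D V p c r (fun k t => (V k t - p) * lostFrac μ Da Θ r t)
      = fNo μ Da Θ p c r := by
    intro r
    unfold fIns fNo
    have h : (∑ k, ∑ t, ((V k t - p) * lostFrac μ Da Θ r t) * D k t)
        = ∑ t, ∫ ω, CsF Da Θ D V p r t ω ∂μ := by
      rw [Finset.sum_comm]
      refine Finset.sum_congr rfl fun t _ => ?_
      rw [hIntCs r t]
      exact Finset.sum_congr rfl fun k _ => by ring
    rw [h]; ring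
  have hMono : ∀ r : ℝ, 0 ≤ r → ∀ π : Fin (n + 1) → T → ℝ, IRcond μ Da Θ p r π V →
      fIns μ Da Θ D V p c r π ≤
        fIns μ Da Θ D V p c r (fun k t => (V k t - p) * lostFrac μ Da Θ r t) := by
    intro r _ π hIR
    unfold fIns
    have h : (∑ k, ∑ t, π k t * D k t)
        ≤ ∑ k, ∑ t, ((V k t - p) * lostFrac μ Da Θ r t) * D k t := by
      refine Finset.sum_le_sum fun k _ => Finset.sum_le_sum fun t _ => ?_
      exact mul_le_mul_of_nonneg_right ((hIR t k).2) (hD k t).le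
    linarith
  have hIC : ∀ r : ℝ,
      ICcond μ Da Θ r (fun k t => (V k t - p) * lostFrac μ Da Θ r t) V := by
    intro r t k m; ring
  have hIR : ∀ r : ℝ,
      IRcond μ Da Θ p r (fun k t => (V k t - p) * lostFrac μ Da Θ r t) V := by
    intro r t k
    exact ⟨mul_nonneg (by linarith [hVp k t]) (hlf0 r t), le_refl _⟩
  refine ⟨hMono, fun r _ => hEq r, fun r _ => hIC r, ?_⟩
  -- the sSup equality
  set A := {x : ℝ | ∃ r : ℝ, 0 ≤ r ∧ ∃ π : Fin (n + 1) → T → ℝ,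
      ICcond μ Da Θ r π V ∧ IRcond μ Da Θ p r π V ∧ x = fIns μ Da Θ D V p c r π} with hA
  set B := {x : ℝ | ∃ r : ℝ, 0 ≤ r ∧ x = fNo μ Da Θ p c r} with hB
  have hBsubA : B ⊆ A := by
    rintro x ⟨r, hr, rfl⟩
    exact ⟨r, hr, _, hIC r, hIR r, (hEq r).symm⟩
  have hBne : B.Nonempty := ⟨fNo μ Da Θ p c 0, 0, le_refl _, rfl⟩
  -- bound on fNo
  have hIntS : ∀ r, 0 ≤ r → ∀ t, (∫ ω, supplyF Da Θ r t ω ∂μ) ≤ Da t := by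
    intro r hr t
    have hmeas : Measurable (fun ω => supplyF Da Θ r t ω) :=
      measurable_const.min ((hΘmeas t).const_mul r)
    have hInt : Integrable (fun ω => supplyF Da Θ r t ω) μ := by
      refine (integrable_const (Da t)).mono' hmeas.aestronglyMeasurable
        (Filter.Eventually.of_forall fun ω => ?_)
      rw [Real.norm_eq_abs, abs_of_nonneg (hs0 r hr t ω)]
      exact min_le_left _ _
    calc (∫ ω, supplyF Da Θ r t ω ∂μ) ≤ ∫ _, Da t ∂μ :=
          integral_mono hInt (integrable_const _) fun ω => min_le_left _ _
      _ = Da t := by simp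
  have hBddB : BddAbove B := by
    refine ⟨∑ t, p * Da t, ?_⟩
    rintro x ⟨r, hr, rfl⟩
    unfold fNo
    have h1 : (∑ t, p * ∫ ω, supplyF Da Θ r t ω ∂μ) ≤ ∑ t, p * Da t :=
      Finset.sum_le_sum fun t _ =>
        mul_le_mul_of_nonneg_left (hIntS r hr t) hp0
    nlinarith
  have hBddA : BddAbove A := by
    obtain ⟨M, hM⟩ := hBddB
    refine ⟨M, ?_⟩
    rintro x ⟨r, hr, π, _, hir, rfl⟩
    calc fIns μ Da Θ D V p c r π
        ≤ fIns μ Da Θ D V p c r (fun k t => (V k t - p) * lostFrac μ Da Θ r t) :=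
          hMono r hr π hir
      _ = fNo μ Da Θ p c r := hEq r
      _ ≤ M := hM ⟨r, hr, rfl⟩
  refine le_antisymm ?_ (csSup_le_csSup hBddA hBne hBsubA)
  refine csSup_le (hBne.mono hBsubA) ?_
  rintro x ⟨r, hr, π, _, hir, rfl⟩
  calc fIns μ Da Θ D V p c r π
      ≤ fNo μ Da Θ p c r := (hMono r hr π hir).trans_eq (hEq r)
    _ ≤ sSup B := le_csSup hBddB ⟨r, hr, rfl⟩

end
end
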